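/- Let Δ > 0 and 0 < Δ_P ≤ Δ. Then for every real c ≤ −1 and all reals r, r̂ with 0 ≤ r̂ ≤ r < Δ and r − r̂ ≤ Δ_P, the index-rounding error of the ratio table satisfies |Q⁻(c, r) − Q⁻(c, r̂)| ≤ 1 − (2^{−(Δ−Δ_P)} + (Δ − Δ_P)·ln 2 − 1)/(2^{−Δ} + Δ·ln 2 − 1). -/

import Mathlib

/-- Φ⁻(x) = log₂(1 − 2^x) -/
noncomputable def Phim (x : ℝ) : ℝ := Real.logb 2 (1 - (2:ℝ) ^ x)

/-- (Φ⁻)'(x) = −2^x / (1 − 2^x) -/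
noncomputable def dPhim (x : ℝ) : ℝ := -(2:ℝ) ^ x / (1 - (2:ℝ) ^ x)

/-- First-order Taylor remainder E⁻(i, r) -/
noncomputable def Em (i r : ℝ) : ℝ := Phim (i - r) - Phim i + r * dPhim i

/-- Error ratio Q⁻(i, r) = E⁻(i, r)/E⁻(i, Δ) -/
noncomputable def Qm (Δ i r : ℝ) : ℝ := Em i r / Em i Δ

/-!
For `c < 0` the map `r ↦ E⁻(c, r)` vanishes at `0` and is decreasing and concave on `[0, ∞)`,
since `(Φ⁻)'` is decreasing. Concavity moves the increment `E⁻(c, r) − E⁻(c, r̂)` to the right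
end of `[0, Δ]`, where it is at least `E⁻(c, Δ) − E⁻(c, Δ − Δ_P)`; hence
`|Q⁻(c, r) − Q⁻(c, r̂)| ≤ 1 − Q⁻(c, Δ − Δ_P)`. Finally `∂ᵣE⁻(c, r) = F'(r) ρ(c, r)` with
`F = remainderLimit` and `ρ = derivRatio` increasing in `r`, so the monotone l'Hôpital rule gives
`Q⁻(c, s) ≥ F(s) / F(Δ)`.
-/

open Real Set

section Calculus

variable {f g g' ρ : ℝ → ℝ}

theorem exists_sub_eq_mul_of_hasDerivAt_eq_mul {a b : ℝ} (hab : a < b)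
    (hf : ∀ x ∈ Icc a b, HasDerivAt f (g' x * ρ x) x)
    (hg : ∀ x ∈ Icc a b, HasDerivAt g (g' x) x) (hg' : ∀ x ∈ Ioo a b, g' x ≠ 0) :
    ∃ ξ ∈ Ioo a b, f b - f a = (g b - g a) * ρ ξ := by
  obtain ⟨ξ, hξ, h⟩ := exists_ratio_hasDerivAt_eq_ratio_slope f (fun x => g' x * ρ x) hab
    (fun x hx => (hf x hx).continuousAt.continuousWithinAt)
    (fun x hx => hf x (Ioo_subset_Icc_self hx)) g g'
    (fun x hx => (hg x hx).continuousAt.continuousWithinAt)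
    (fun x hx => hg x (Ioo_subset_Icc_self hx))
  refine ⟨ξ, hξ, mul_left_cancel₀ (hg' ξ hξ) ?_⟩
  linear_combination -h

/-- Monotone form of l'Hôpital's rule: `f / g` increases when `f' / g' = ρ` does. -/
theorem mul_le_mul_of_hasDerivAt_eq_mul_of_monotoneOn {a s t : ℝ} (has : a ≤ s) (hst : s ≤ t)
    (hfa : f a = 0) (hga : g a = 0)
    (hf : ∀ x ∈ Icc a t, HasDerivAt f (g' x * ρ x) x)
    (hg : ∀ x ∈ Icc a t, HasDerivAt g (g' x) x) (hg' : ∀ x ∈ Ioo a t, 0 < g' x)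
    (hρ : MonotoneOn ρ (Ioo a t)) :
    f s * g t ≤ f t * g s := by
  rcases has.eq_or_lt with rfl | has
  · simp [hfa, hga]
  rcases hst.eq_or_lt with rfl | hst
  · rfl
  have hg_mono : MonotoneOn g (Icc a t) :=
    monotoneOn_of_hasDerivWithinAt_nonneg (convex_Icc a t)
      (fun x hx => (hg x hx).continuousAt.continuousWithinAt)
      (fun x hx => (hg x (interior_subset hx)).hasDerivWithinAt)
      (fun x hx => (hg' x (by rwa [interior_Icc] at hx)).le)
  have hsub₁ : Icc a s ⊆ Icc a t := Icc_subset_Icc_right hst.le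
  have hsub₂ : Icc s t ⊆ Icc a t := Icc_subset_Icc_left has.le
  obtain ⟨ξ, hξ, hfs⟩ := exists_sub_eq_mul_of_hasDerivAt_eq_mul has
    (fun x hx => hf x (hsub₁ hx)) (fun x hx => hg x (hsub₁ hx))
    (fun x hx => (hg' x (Ioo_subset_Ioo_right hst.le hx)).ne')
  obtain ⟨η, hη, hft⟩ := exists_sub_eq_mul_of_hasDerivAt_eq_mul hst
    (fun x hx => hf x (hsub₂ hx)) (fun x hx => hg x (hsub₂ hx))
    (fun x hx => (hg' x (Ioo_subset_Ioo_left has.le hx)).ne')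
  have hρξη : ρ ξ ≤ ρ η := hρ (Ioo_subset_Ioo_right hst.le hξ) (Ioo_subset_Ioo_left has.le hη)
    (hξ.2.trans hη.1).le
  have hgs : 0 ≤ g s := hga ▸ hg_mono (left_mem_Icc.2 (has.trans hst).le) ⟨has.le, hst.le⟩ has.le
  have hgst : g s ≤ g t := hg_mono ⟨has.le, hst.le⟩ (right_mem_Icc.2 (has.trans hst).le) hst.le
  rw [hfa, hga, sub_zero, sub_zero] at hfs
  -- `f t * g s - f s * g t = g s * (g t - g s) * (ρ η - ρ ξ)`
  nlinarith [mul_nonneg (mul_nonneg hgs (sub_nonneg.2 hgst)) (sub_nonneg.2 hρξη)]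

theorem antitoneOn_add_sub_of_hasDerivAt {f' : ℝ → ℝ} {a h : ℝ} (hh : 0 ≤ h)
    (hf : ∀ x ∈ Ici a, HasDerivAt f (f' x) x) (hf' : AntitoneOn f' (Ici a)) :
    AntitoneOn (fun x => f (x + h) - f x) (Ici a) := by
  have hderiv : ∀ x ∈ Ici a, HasDerivAt (fun x => f (x + h) - f x) (f' (x + h) - f' x) x :=
    fun x hx => by
      have hxh : x + h ∈ Ici a := le_add_of_le_of_nonneg hx hh
      exact ((hf _ hxh).comp_add_const x h).sub (hf x hx)
  refine antitoneOn_of_hasDerivWithinAt_nonpos (convex_Ici a)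
    (fun x hx => (hderiv x hx).continuousAt.continuousWithinAt)
    (fun x hx => (hderiv x (interior_subset hx)).hasDerivWithinAt) fun x hx => ?_
  have hx : x ∈ Ici a := interior_subset hx
  exact sub_nonpos.2 (hf' hx (le_add_of_le_of_nonneg hx hh) (le_add_of_nonneg_right hh))

end Calculus

lemma two_rpow_lt_one {x : ℝ} (hx : x < 0) : (2:ℝ) ^ x < 1 :=
  rpow_lt_one_of_one_lt_of_neg one_lt_two hx

lemma hasDerivAt_Phim {y : ℝ} (hy : y < 0) : HasDerivAt Phim (dPhim y) y := by
  have hpos : 0 < 1 - (2:ℝ) ^ y := sub_pos.2 (two_rpow_lt_one hy)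
  have hlog : HasDerivAt (fun x => log (1 - (2:ℝ) ^ x) / log 2)
      (-((2:ℝ) ^ y * log 2) / (1 - (2:ℝ) ^ y) / log 2) y :=
    (((hasStrictDerivAt_const_rpow two_pos y).hasDerivAt.const_sub 1).log hpos.ne').div_const _
  convert hlog using 1
  · funext x; simp [Phim, logb]
  · have : log 2 ≠ 0 := by positivity
    rw [dPhim]
    field_simp

lemma strictAntiOn_dPhim : StrictAntiOn dPhim (Iio 0) := by
  intro x hx y hy hxy
  have hu : 0 < 1 - (2:ℝ) ^ x := sub_pos.2 (two_rpow_lt_one hx)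
  have hv : 0 < 1 - (2:ℝ) ^ y := sub_pos.2 (two_rpow_lt_one hy)
  have hxy' : (2:ℝ) ^ x < (2:ℝ) ^ y := rpow_lt_rpow_of_exponent_lt one_lt_two hxy
  rw [dPhim, dPhim, neg_div, neg_div, neg_lt_neg_iff, div_lt_div_iff₀ hu hv]
  nlinarith

lemma hasDerivAt_Em {c x : ℝ} (hcx : c - x < 0) :
    HasDerivAt (Em c) (dPhim c - dPhim (c - x)) x := by
  have hPhi : HasDerivAt (fun r => Phim (c - r)) (-dPhim (c - x)) x := by
    simpa [Function.comp_def] using (hasDerivAt_Phim hcx).comp x ((hasDerivAt_id x).const_sub c)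
  exact ((hPhi.sub_const (Phim c)).add ((hasDerivAt_id x).mul_const (dPhim c))).congr_deriv
    (by ring)

lemma strictAntiOn_Em {c : ℝ} (hc : c < 0) : StrictAntiOn (Em c) (Ici 0) := by
  have hderiv : ∀ x ∈ Ici (0:ℝ), HasDerivAt (Em c) (dPhim c - dPhim (c - x)) x :=
    fun x hx => hasDerivAt_Em (by linarith [mem_Ici.1 hx])
  refine strictAntiOn_of_hasDerivWithinAt_neg (convex_Ici 0)
    (fun x hx => (hderiv x hx).continuousAt.continuousWithinAt)
    (fun x hx => (hderiv x (interior_subset hx)).hasDerivWithinAt) fun x hx => ?_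
  rw [interior_Ici, mem_Ioi] at hx
  exact sub_neg.2 (strictAntiOn_dPhim (by simp; linarith) hc (by linarith))

lemma Em_zero (c : ℝ) : Em c 0 = 0 := by simp [Em]

lemma Em_neg {c s : ℝ} (hc : c < 0) (hs : 0 < s) : Em c s < 0 :=
  Em_zero c ▸ strictAntiOn_Em hc self_mem_Ici hs.le hs

/-- `−ln 2 · 2^{−c} · E⁻(c, s)` tends to `remainderLimit s` as `c → −∞`. -/
noncomputable def remainderLimit (s : ℝ) : ℝ := (2:ℝ) ^ (-s) + s * log 2 - 1

lemma hasDerivAt_remainderLimit (x : ℝ) :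
    HasDerivAt remainderLimit (log 2 * (1 - (2:ℝ) ^ (-x))) x := by
  have hexp : HasDerivAt (fun s : ℝ => (2:ℝ) ^ (-s)) ((2:ℝ) ^ (-x) * log 2 * (-1)) x :=
    (hasStrictDerivAt_const_rpow two_pos (-x)).hasDerivAt.comp x (hasDerivAt_neg x)
  exact ((hexp.add ((hasDerivAt_id x).mul_const (log 2))).sub_const 1).congr_deriv (by ring)

lemma deriv_remainderLimit_pos {x : ℝ} (hx : 0 < x) : 0 < log 2 * (1 - (2:ℝ) ^ (-x)) :=
  mul_pos (log_pos one_lt_two) (sub_pos.2 (two_rpow_lt_one (neg_neg_of_pos hx)))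

lemma remainderLimit_pos {s : ℝ} (hs : 0 < s) : 0 < remainderLimit s := by
  have hmono : StrictMonoOn remainderLimit (Ici 0) :=
    strictMonoOn_of_hasDerivWithinAt_pos (convex_Ici 0)
      (fun x _ => (hasDerivAt_remainderLimit x).continuousAt.continuousWithinAt)
      (fun x _ => (hasDerivAt_remainderLimit x).hasDerivWithinAt)
      (fun x hx => deriv_remainderLimit_pos (by rwa [interior_Ici] at hx))
  simpa [remainderLimit] using hmono self_mem_Ici hs.le hs

noncomputable def derivRatio (c x : ℝ) : ℝ :=
  -(2:ℝ) ^ c / (log 2 * ((1 - (2:ℝ) ^ c) * (1 - (2:ℝ) ^ (c - x))))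

lemma dPhim_sub_dPhim_eq {c x : ℝ} (hc : c < 0) (hcx : c - x < 0) :
    dPhim c - dPhim (c - x) = log 2 * (1 - (2:ℝ) ^ (-x)) * derivRatio c x := by
  have hu : 1 - (2:ℝ) ^ c ≠ 0 := (sub_pos.2 (two_rpow_lt_one hc)).ne'
  have hv : 1 - (2:ℝ) ^ (c - x) ≠ 0 := (sub_pos.2 (two_rpow_lt_one hcx)).ne'
  have hlog : log 2 ≠ 0 := by positivity
  have hsplit : (2:ℝ) ^ (c - x) = (2:ℝ) ^ c * (2:ℝ) ^ (-x) := by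
    rw [← rpow_add two_pos, sub_eq_add_neg]
  rw [dPhim, dPhim, derivRatio]
  field_simp
  rw [hsplit]
  ring

lemma monotoneOn_derivRatio {c : ℝ} (hc : c < 0) : MonotoneOn (derivRatio c) (Ici 0) := by
  intro x hx y _ hxy
  have hu : 0 < 1 - (2:ℝ) ^ c := sub_pos.2 (two_rpow_lt_one hc)
  have hvx : 0 < 1 - (2:ℝ) ^ (c - x) := sub_pos.2 (two_rpow_lt_one (by linarith [mem_Ici.1 hx]))
  have hvy : (2:ℝ) ^ (c - y) ≤ (2:ℝ) ^ (c - x) :=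
    rpow_le_rpow_of_exponent_le one_le_two (by linarith)
  rw [derivRatio, derivRatio, neg_div, neg_div, neg_le_neg_iff]
  gcongr

lemma Em_mul_remainderLimit_le {c s t : ℝ} (hc : c < 0) (hs : 0 ≤ s) (hst : s ≤ t) :
    Em c s * remainderLimit t ≤ Em c t * remainderLimit s := by
  refine mul_le_mul_of_hasDerivAt_eq_mul_of_monotoneOn hs hst (Em_zero c)
    (by simp [remainderLimit]) (fun x hx => ?_) (fun x _ => hasDerivAt_remainderLimit x)
    (fun x hx => deriv_remainderLimit_pos hx.1)
    ((monotoneOn_derivRatio hc).mono fun x hx => hx.1.le)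
  have hcx : c - x < 0 := by linarith [hx.1]
  exact dPhim_sub_dPhim_eq hc hcx ▸ hasDerivAt_Em hcx

lemma remainderLimit_div_le_Em_div {c s t : ℝ} (hc : c < 0) (hs : 0 ≤ s) (hst : s ≤ t)
    (ht : 0 < t) : remainderLimit s / remainderLimit t ≤ Em c s / Em c t := by
  rw [← neg_div_neg_eq (Em c s), div_le_div_iff₀ (remainderLimit_pos ht)
    (neg_pos.2 (Em_neg hc ht))]
  linarith [Em_mul_remainderLimit_le hc hs hst]

lemma antitoneOn_Em_add_sub {c h : ℝ} (hc : c < 0) (hh : 0 ≤ h) :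
    AntitoneOn (fun x => Em c (x + h) - Em c x) (Ici 0) := by
  refine antitoneOn_add_sub_of_hasDerivAt hh
    (fun x hx => hasDerivAt_Em (by linarith [mem_Ici.1 hx]))
    fun x hx y hy hxy => sub_le_sub_left ?_ _
  exact strictAntiOn_dPhim.antitoneOn (by simp; linarith [mem_Ici.1 hy])
    (by simp; linarith [mem_Ici.1 hx]) (by linarith)

theorem stmt_13_general (Δ ΔP : ℝ) (hΔPΔ : ΔP ≤ Δ) :
    ∀ c r rhat : ℝ, c ≤ -1 → 0 ≤ rhat → rhat ≤ r → r < Δ → r - rhat ≤ ΔP →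
      |Qm Δ c r - Qm Δ c rhat| ≤
        1 - ((2:ℝ) ^ (-(Δ - ΔP)) + (Δ - ΔP) * Real.log 2 - 1) /
            ((2:ℝ) ^ (-Δ) + Δ * Real.log 2 - 1) := by
  intro c r rhat hc hrhat hrr hrΔ hrΔP
  have hc0 : c < 0 := by linarith
  have hΔ : 0 < Δ := by linarith
  have hEΔ : Em c Δ < 0 := Em_neg hc0 hΔ
  have hanti : AntitoneOn (Em c) (Ici 0) := (strictAntiOn_Em hc0).antitoneOn
  have hshift : Em c Δ - Em c (Δ - (r - rhat)) ≤ Em c r - Em c rhat := by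
    simpa using antitoneOn_Em_add_sub hc0 (sub_nonneg.2 hrr) hrhat
      (show (0:ℝ) ≤ Δ - (r - rhat) by linarith) (show rhat ≤ Δ - (r - rhat) by linarith)
  have hlow : Em c Δ - Em c (Δ - ΔP) ≤ Em c r - Em c rhat := by
    have := hanti (show (0:ℝ) ≤ Δ - ΔP by linarith) (show (0:ℝ) ≤ Δ - (r - rhat) by linarith)
      (show Δ - ΔP ≤ Δ - (r - rhat) by linarith)
    linarith
  have hup : Em c r - Em c rhat ≤ 0 := sub_nonpos.2 (hanti hrhat (hrhat.trans hrr) hrr)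
  have hratio := remainderLimit_div_le_Em_div hc0 (sub_nonneg.2 hΔPΔ)
    (show Δ - ΔP ≤ Δ by linarith) hΔ
  change _ ≤ 1 - remainderLimit (Δ - ΔP) / remainderLimit Δ
  rw [Qm, Qm, div_sub_div_same, abs_of_nonneg (div_nonneg_of_nonpos hup hEΔ.le)]
  calc (Em c r - Em c rhat) / Em c Δ
      ≤ (Em c Δ - Em c (Δ - ΔP)) / Em c Δ := div_le_div_of_nonpos_of_le hEΔ.le hlow
    _ = 1 - Em c (Δ - ΔP) / Em c Δ := by rw [sub_div, div_self hEΔ.ne]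
    _ ≤ 1 - remainderLimit (Δ - ΔP) / remainderLimit Δ := sub_le_sub_left hratio 1

theorem stmt_13 (Δ ΔP : ℝ) (hΔ : 0 < Δ) (hΔP : 0 < ΔP) (hΔPΔ : ΔP ≤ Δ) :
    ∀ c r rhat : ℝ, c ≤ -1 → 0 ≤ rhat → rhat ≤ r → r < Δ → r - rhat ≤ ΔP →
      |Qm Δ c r - Qm Δ c rhat| ≤
        1 - ((2:ℝ) ^ (-(Δ - ΔP)) + (Δ - ΔP) * Real.log 2 - 1) /
            ((2:ℝ) ^ (-Δ) + Δ * Real.log 2 - 1) :=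
  stmt_13_general Δ ΔP hΔPΔ
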